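/- arXiv:1506.03759 — 7 statements merged into one kernel-verified Lean document; each statement's English description precedes it below -/
import Mathlib

section
/- For n = 7, the maximum number of edges in a P³₃-free 3-uniform hypergraph on 7 vertices is 20, and the unique (up to isomorphism) extremal 3-graph is the complete 3-graph K³₆ on 6 vertices together with one isolated vertex. -/
/-- `H` contains a copy of the 3-uniform linear path `P³₃`:
three edges with consecutive intersections of size 1 and disjoint end edges. -/
def HasP33 {V : Type*} [DecidableEq V] (H : Finset (Finset V)) : Prop :=
  ∃ e₁ e₂ e₃, e₁ ∈ H ∧ e₂ ∈ H ∧ e₃ ∈ H ∧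
    (e₁ ∩ e₂).card = 1 ∧ (e₂ ∩ e₃).card = 1 ∧ e₁ ∩ e₃ = ∅

/-!
If two edges `A`, `B` of a `P³₃`-free 3-graph `H` on 7 vertices are disjoint, no edge meets both
in exactly one vertex, so an edge through the remaining vertex `v` is `v` together with a pair
inside `A` or inside `B`. Such an edge `t` excludes the six triples `f` of `A ∪ B` for which
`t, f, B` or `t, f, A` is a linear path, while each side offers only three edges through `v`.
Hence either `v` is isolated and `H ⊆ K³₆`, or `|H| ≤ 14 + 3` (or `8 + 6` with edges through `v`
on both sides). If no two edges are disjoint, Erdős–Ko–Rado gives `|H| ≤ 15`. Finally `K³₆` is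
`P³₃`-free: the end edges of a linear path in it cover all six vertices, leaving only two for
the middle edge.
-/

open Finset Equiv
open scoped Pointwise

section LinearPath

variable {V : Type*} [DecidableEq V]

def IsLinearPath (e₁ e₂ e₃ : Finset V) : Prop :=
  #(e₁ ∩ e₂) = 1 ∧ #(e₂ ∩ e₃) = 1 ∧ e₁ ∩ e₃ = ∅

instance (e₁ e₂ e₃ : Finset V) : Decidable (IsLinearPath e₁ e₂ e₃) :=
  inferInstanceAs (Decidable (_ ∧ _ ∧ _))

theorem notMem_of_isLinearPath {H : Finset (Finset V)} {e₁ e₂ e₃ : Finset V} (hP : ¬HasP33 H)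
    (h₁ : e₁ ∈ H) (h₃ : e₃ ∈ H) (h : IsLinearPath e₁ e₂ e₃) : e₂ ∉ H :=
  fun h₂ => hP ⟨e₁, e₂, e₃, h₁, h₂, h₃, h⟩

theorem isLinearPath_smul_iff {G : Type*} [Group G] [MulAction G V] (g : G)
    {e₁ e₂ e₃ : Finset V} :
    IsLinearPath (g • e₁) (g • e₂) (g • e₃) ↔ IsLinearPath e₁ e₂ e₃ := by
  simp only [IsLinearPath, ← smul_finset_inter, card_smul_finset, smul_finset_eq_empty]

theorem HasP33.of_smul {G : Type*} [Group G] [MulAction G V] {g : G} {H : Finset (Finset V)}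
    (h : HasP33 (g • H)) : HasP33 H := by
  obtain ⟨_, _, _, hf₁, hf₂, hf₃, hpath⟩ := h
  obtain ⟨e₁, h₁, rfl⟩ := mem_smul_finset.1 hf₁
  obtain ⟨e₂, h₂, rfl⟩ := mem_smul_finset.1 hf₂
  obtain ⟨e₃, h₃, rfl⟩ := mem_smul_finset.1 hf₃
  exact ⟨e₁, e₂, e₃, h₁, h₂, h₃, (isLinearPath_smul_iff g).1 hpath⟩

theorem not_hasP33_powersetCard {s : Finset V} {k : ℕ} (hk : 2 < k) (hs : #s ≤ 2 * k) :
    ¬HasP33 (s.powersetCard k) := by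
  rintro ⟨e₁, e₂, e₃, h₁, h₂, h₃, h₁₂, h₂₃, h₁₃⟩
  rw [mem_powersetCard] at h₁ h₂ h₃
  have hcover : e₁ ∪ e₃ = s := by
    refine eq_of_subset_of_card_le (union_subset h₁.1 h₃.1) ?_
    rw [card_union_of_disjoint (disjoint_iff_inter_eq_empty.2 h₁₃), h₁.2, h₃.2]
    omega
  have : #e₂ ≤ #(e₁ ∩ e₂) + #(e₂ ∩ e₃) := by
    calc #e₂ = #(e₂ ∩ (e₁ ∪ e₃)) := by rw [hcover, inter_eq_left.2 h₂.1]
      _ ≤ #(e₁ ∩ e₂) + #(e₂ ∩ e₃) := by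
        rw [inter_union_distrib_left, inter_comm e₂ e₁]
        exact card_union_le _ _
  omega

theorem mem_powersetCard_erase [Fintype V] {e : Finset V} {k : ℕ} {v : V} (he : #e = k)
    (hv : v ∉ e) : e ∈ (univ.erase v).powersetCard k :=
  mem_powersetCard.2 ⟨subset_erase.2 ⟨subset_univ e, hv⟩, he⟩

end LinearPath

namespace TuranP33

abbrev Triples : Type := Finset (Finset (Fin 7))

def A₀ : Finset (Fin 7) := {0, 1, 2}
def B₀ : Finset (Fin 7) := {3, 4, 5}
def K₆ : Triples := (univ.erase 6).powersetCard 3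
def spokesA : Triples := {{0, 1, 6}, {0, 2, 6}, {1, 2, 6}}
def spokesB : Triples := {{3, 4, 6}, {3, 5, 6}, {4, 5, 6}}

def blocked (t : Finset (Fin 7)) : Triples :=
  K₆.filter fun f => IsLinearPath t f A₀ ∨ IsLinearPath t f B₀

set_option maxRecDepth 10000 in
theorem exists_swap_smul_eq :
    ∀ B : Finset (Fin 7), #B = 3 → Disjoint A₀ B →
      ∃ w : Fin 7, swap w 6 • A₀ = A₀ ∧ swap w 6 • B = B₀ := by
  decide

set_option maxRecDepth 10000 in
theorem mem_spokes_of_not_isLinearPath :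
    ∀ e : Finset (Fin 7), #e = 3 → 6 ∈ e → ¬IsLinearPath A₀ e B₀ → e ∈ spokesA ∪ spokesB := by
  decide

set_option maxRecDepth 10000 in
theorem card_K₆_sdiff_blocked : ∀ t ∈ spokesA ∪ spokesB, #(K₆ \ blocked t) = 14 := by
  decide

set_option maxRecDepth 10000 in
theorem card_K₆_sdiff_blocked_union :
    ∀ t ∈ spokesA, ∀ t' ∈ spokesB, #(K₆ \ (blocked t ∪ blocked t')) = 8 := by
  decide

theorem exists_perm_smul_eq {A B : Finset (Fin 7)} (hA : #A = 3) (hB : #B = 3)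
    (hAB : Disjoint A B) : ∃ σ : Perm (Fin 7), σ • A = A₀ ∧ σ • B = B₀ := by
  have := Set.powersetCard.isPretransitive (α := Fin 7) (n := 3)
  obtain ⟨σ, hσ⟩ := MulAction.exists_smul_eq (Perm (Fin 7))
    (⟨A, hA⟩ : Set.powersetCard (Fin 7) 3) ⟨A₀, rfl⟩
  replace hσ : σ • A = A₀ := congrArg Subtype.val hσ
  obtain ⟨w, hwA, hwB⟩ := exists_swap_smul_eq (σ • B) (by rw [card_smul_finset, hB])
    (by rw [← hσ, ← disjoint_coe, coe_smul_finset, coe_smul_finset, Set.disjoint_smul_set,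
      disjoint_coe]; exact hAB)
  exact ⟨swap w 6 * σ, by rw [mul_smul, hσ, hwA], by rw [mul_smul, hwB]⟩

section

variable {H : Triples} (h3 : ∀ e ∈ H, #e = 3) (hP : ¬HasP33 H) (hA : A₀ ∈ H) (hB : B₀ ∈ H)
include h3 hP hA hB

theorem mem_spokes {e : Finset (Fin 7)} (he : e ∈ H) (h6 : 6 ∈ e) : e ∈ spokesA ∪ spokesB :=
  mem_spokes_of_not_isLinearPath e (h3 e he) h6 fun h => notMem_of_isLinearPath hP hA hB h he

omit h3 in
theorem disjoint_blocked {t : Finset (Fin 7)} (ht : t ∈ H) : Disjoint H (blocked t) := by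
  refine disjoint_right.2 fun f hf hfH => ?_
  obtain ⟨-, hpath | hpath⟩ := mem_filter.1 hf
  · exact notMem_of_isLinearPath hP ht hA hpath hfH
  · exact notMem_of_isLinearPath hP ht hB hpath hfH

omit hP hA hB in
theorem card_le_card_sdiff_add {S Z : Triples} (hS : ∀ e ∈ H, 6 ∈ e → e ∈ S)
    (hZ : Disjoint H Z) : #H ≤ #(K₆ \ Z) + #S := by
  have hsub : H ⊆ (K₆ \ Z) ∪ S := by
    intro e he
    by_cases h6 : 6 ∈ e
    · exact mem_union_right _ (hS e he h6)
    · exact mem_union_left _ (mem_sdiff.2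
        ⟨mem_powersetCard_erase (h3 e he) h6, disjoint_left.1 hZ he⟩)
  exact (card_le_card hsub).trans (card_union_le _ _)

theorem card_le_seventeen (h6 : ∃ t ∈ H, 6 ∈ t) : #H ≤ 17 := by
  have hspoke : ∀ e ∈ H, 6 ∈ e → e ∈ spokesA ∪ spokesB := fun _ => mem_spokes h3 hP hA hB
  obtain ⟨t, ht, ht6⟩ := h6
  by_cases hAside : ∃ a ∈ H, a ∈ spokesA
  · obtain ⟨a, haH, ha⟩ := hAside
    by_cases hBside : ∃ b ∈ H, b ∈ spokesB
    · obtain ⟨b, hbH, hb⟩ := hBside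
      calc #H ≤ #(K₆ \ (blocked a ∪ blocked b)) + #(spokesA ∪ spokesB) :=
            card_le_card_sdiff_add h3 hspoke (disjoint_union_right.2
              ⟨disjoint_blocked hP hA hB haH, disjoint_blocked hP hA hB hbH⟩)
        _ ≤ 17 := by rw [card_K₆_sdiff_blocked_union a ha b hb]; decide
    · push Not at hBside
      calc #H ≤ #(K₆ \ blocked a) + #spokesA :=
            card_le_card_sdiff_add h3
              (fun e he h6 => (mem_union.1 (hspoke e he h6)).resolve_right (hBside e he))
              (disjoint_blocked hP hA hB haH)
        _ = 17 := by rw [card_K₆_sdiff_blocked a (mem_union_left _ ha)]; rfl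
  · push Not at hAside
    have htB : t ∈ spokesB := (mem_union.1 (hspoke t ht ht6)).resolve_left (hAside t ht)
    calc #H ≤ #(K₆ \ blocked t) + #spokesB :=
          card_le_card_sdiff_add h3
            (fun e he h6 => (mem_union.1 (hspoke e he h6)).resolve_left (hAside e he))
            (disjoint_blocked hP hA hB ht)
      _ = 17 := by rw [card_K₆_sdiff_blocked t (mem_union_right _ htB)]; rfl

end

theorem exists_isolated_vertex_or_card_le {H : Triples} (h3 : ∀ e ∈ H, #e = 3)
    (hP : ¬HasP33 H) : (∃ v, ∀ e ∈ H, v ∉ e) ∨ #H ≤ 17 := by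
  by_cases hdisj : ∃ A ∈ H, ∃ B ∈ H, Disjoint A B
  · obtain ⟨A, hAH, B, hBH, hAB⟩ := hdisj
    obtain ⟨σ, hσA, hσB⟩ := exists_perm_smul_eq (h3 A hAH) (h3 B hBH) hAB
    have h3' : ∀ e ∈ σ • H, #e = 3 := by
      intro _ hσe
      obtain ⟨e, he, rfl⟩ := mem_smul_finset.1 hσe
      rw [card_smul_finset, h3 e he]
    have hA' : A₀ ∈ σ • H := hσA ▸ smul_mem_smul_finset hAH
    have hB' : B₀ ∈ σ • H := hσB ▸ smul_mem_smul_finset hBH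
    by_cases h6 : ∃ t ∈ σ • H, 6 ∈ t
    · right
      rw [← card_smul_finset σ H]
      exact card_le_seventeen h3' (fun h => hP h.of_smul) hA' hB' h6
    · push Not at h6
      exact Or.inl ⟨σ⁻¹ • 6, fun e he h =>
        h6 (σ • e) (smul_mem_smul_finset he) (inv_smul_mem_iff.1 h)⟩
  · push Not at hdisj
    right
    calc #H ≤ (7 - 1).choose (3 - 1) :=
          erdos_ko_rado (fun A hA B hB => hdisj A hA B hB) (fun A hA => h3 A hA) (by norm_num)
      _ ≤ 17 := by decide

end TuranP33

open TuranP33 in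
theorem turan_P33_seven :
    IsGreatest {m : ℕ | ∃ H : Finset (Finset (Fin 7)),
      (∀ e ∈ H, e.card = 3) ∧ ¬ HasP33 H ∧ H.card = m} 20 ∧
    ∀ H : Finset (Finset (Fin 7)), (∀ e ∈ H, e.card = 3) → ¬ HasP33 H → H.card = 20 →
      ∃ v : Fin 7, H = (Finset.univ.erase v).powersetCard 3 := by
  have hK : ∀ v : Fin 7, #((univ.erase v).powersetCard 3) = 20 := by
    simp [Nat.choose]
  have hsub {H : Triples} (h3 : ∀ e ∈ H, #e = 3) {v : Fin 7} (hv : ∀ e ∈ H, v ∉ e) :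
      H ⊆ (univ.erase v).powersetCard 3 := fun e he => mem_powersetCard_erase (h3 e he) (hv e he)
  refine ⟨⟨⟨K₆, fun e he => (mem_powersetCard.1 he).2,
    not_hasP33_powersetCard (by norm_num) (by simp), hK 6⟩, ?_⟩, ?_⟩
  · rintro m ⟨H, h3, hP, rfl⟩
    rcases exists_isolated_vertex_or_card_le h3 hP with ⟨v, hv⟩ | h17
    · exact (card_le_card (hsub h3 hv)).trans (hK v).le
    · omega
  · intro H h3 hP h20
    rcases exists_isolated_vertex_or_card_le h3 hP with ⟨v, hv⟩ | h17
    · exact ⟨v, eq_of_subset_of_card_le (hsub h3 hv) (by rw [hK v, h20])⟩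
    · omega
end

section
/- Let C be a triangle (copy of C³₃) on vertex set U in a 3-graph, W disjoint from U, and let T be the set of triples of the form {xᵢ,yᵢ,w} or {xᵢ,xⱼ,w} with w ∈ W (notation as in the standard labelling of C³₃). If e ∈ T, g is a triple contained in W, and e ∩ g ≠ ∅, then C together with e and g contains a copy of P³₃. -/
open Finset Function

namespace Hypergraph

variable {V : Type*} [DecidableEq V]

lemma card_inter_eq_one_of_subset_insert {e g U : Finset V} {w : V} (he : e ⊆ insert w U)
    (hg : Disjoint g U) (heg : (e ∩ g).Nonempty) : #(e ∩ g) = 1 := by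
  have hsub : e ∩ g ⊆ {w} := fun a ha => by
    obtain ⟨hae, hag⟩ := mem_inter.mp ha
    rcases mem_insert.mp (he hae) with rfl | haU
    · exact mem_singleton_self a
    · exact absurd haU (disjoint_left.mp hg hag)
  rw [heg.subset_singleton_iff.mp hsub, card_singleton]

lemma injective_vecCons_of_card_eq {x₁ x₂ x₃ y₁ y₂ y₃ w : V}
    (hdist : #({x₁, x₂, x₃, y₁, y₂, y₃} : Finset V) = 6)
    (hw : w ∉ ({x₁, x₂, x₃, y₁, y₂, y₃} : Finset V)) :
    Injective ![x₁, x₂, x₃, y₁, y₂, y₃, w] := by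
  have himage : univ.image ![x₁, x₂, x₃, y₁, y₂, y₃, w] = insert w {x₁, x₂, x₃, y₁, y₂, y₃} := by
    ext v
    simp [Fin.exists_fin_succ]
    tauto
  have hcard : #(univ.image ![x₁, x₂, x₃, y₁, y₂, y₃, w]) = #(univ : Finset (Fin 7)) := by
    rw [himage, card_insert_of_notMem hw, hdist, card_univ, Fintype.card_fin]
  simpa using card_image_iff.mp hcard

def triangle (x₁ x₂ x₃ y₁ y₂ y₃ : V) : Finset (Finset V) :=
  {{x₁, y₂, x₃}, {x₂, y₃, x₁}, {x₃, y₁, x₂}}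

lemma subset_of_mem_triangle {x₁ x₂ x₃ y₁ y₂ y₃ : V} {f : Finset V}
    (hf : f ∈ triangle x₁ x₂ x₃ y₁ y₂ y₃) : f ⊆ {x₁, x₂, x₃, y₁, y₂, y₃} := by
  simp only [triangle, mem_insert, mem_singleton] at hf
  rcases hf with rfl | rfl | rfl <;> simp [insert_subset_iff]

def crossingTriples (x₁ x₂ x₃ y₁ y₂ y₃ w : V) : Finset (Finset V) :=
  {{x₁, y₁, w}, {x₂, y₂, w}, {x₃, y₃, w}, {x₁, x₂, w}, {x₁, x₃, w}, {x₂, x₃, w}}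

lemma subset_insert_of_mem_crossingTriples {x₁ x₂ x₃ y₁ y₂ y₃ w : V} {e : Finset V}
    (he : e ∈ crossingTriples x₁ x₂ x₃ y₁ y₂ y₃ w) : e ⊆ insert w {x₁, x₂, x₃, y₁, y₂, y₃} := by
  simp only [crossingTriples, mem_insert, mem_singleton] at he
  rcases he with rfl | rfl | rfl | rfl | rfl | rfl <;> simp [insert_subset_iff]

lemma exists_mem_triangle_card_inter_eq_one_fin :
    ∀ E ∈ crossingTriples (0 : Fin 7) 1 2 3 4 5 6,
      ∃ F ∈ triangle (0 : Fin 7) 1 2 3 4 5, #(F ∩ E) = 1 := by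
  decide +kernel

lemma exists_mem_triangle_card_inter_eq_one {x₁ x₂ x₃ y₁ y₂ y₃ w : V}
    (hinj : Injective ![x₁, x₂, x₃, y₁, y₂, y₃, w]) {e : Finset V}
    (he : e ∈ crossingTriples x₁ x₂ x₃ y₁ y₂ y₃ w) :
    ∃ f ∈ triangle x₁ x₂ x₃ y₁ y₂ y₃, #(f ∩ e) = 1 := by
  set φ := ![x₁, x₂, x₃, y₁, y₂, y₃, w]
  obtain ⟨E, hE, rfl⟩ : ∃ E ∈ crossingTriples (0 : Fin 7) 1 2 3 4 5 6, e = E.image φ := by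
    simpa [crossingTriples, φ] using he
  obtain ⟨F, hF, hFE⟩ := exists_mem_triangle_card_inter_eq_one_fin E hE
  refine ⟨F.image φ, ?_, ?_⟩
  · simp only [triangle, mem_insert, mem_singleton] at hF
    rcases hF with rfl | rfl | rfl <;> simp [triangle, φ]
  · rw [← image_inter _ _ hinj, card_image_of_injective _ hinj, hFE]

end Hypergraph

open Hypergraph

theorem T_edge_meets_W_triple_gives_P33_general (V : Type*) [DecidableEq V]
    (x₁ x₂ x₃ y₁ y₂ y₃ : V)
    (hdist : ({x₁, x₂, x₃, y₁, y₂, y₃} : Finset V).card = 6)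
    (w : V) (hw : w ∉ ({x₁, x₂, x₃, y₁, y₂, y₃} : Finset V))
    (e : Finset V)
    (he : e = {x₁, y₁, w} ∨ e = {x₂, y₂, w} ∨ e = {x₃, y₃, w} ∨
          e = {x₁, x₂, w} ∨ e = {x₁, x₃, w} ∨ e = {x₂, x₃, w})
    (g : Finset V)
    (hgU : g ∩ ({x₁, x₂, x₃, y₁, y₂, y₃} : Finset V) = ∅)
    (heg : (e ∩ g).Nonempty) :
    HasP33 ({({x₁, y₂, x₃} : Finset V), {x₂, y₃, x₁}, {x₃, y₁, x₂}} ∪ {e, g}) := by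
  have he' : e ∈ crossingTriples x₁ x₂ x₃ y₁ y₂ y₃ w := by simpa [crossingTriples] using he
  have hgU_disj : Disjoint g {x₁, x₂, x₃, y₁, y₂, y₃} := disjoint_iff_inter_eq_empty.mpr hgU
  have hinj := injective_vecCons_of_card_eq hdist hw
  obtain ⟨f, hf, hfe⟩ := exists_mem_triangle_card_inter_eq_one hinj he'
  have hfg : f ∩ g = ∅ :=
    disjoint_iff_inter_eq_empty.mp (hgU_disj.symm.mono_left (subset_of_mem_triangle hf))
  have heg1 : #(e ∩ g) = 1 :=
    card_inter_eq_one_of_subset_insert (subset_insert_of_mem_crossingTriples he') hgU_disj heg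
  exact ⟨f, e, g, mem_union_left _ hf, by simp, by simp, hfe, heg1, hfg⟩

theorem T_edge_meets_W_triple_gives_P33 (V : Type*) [DecidableEq V]
    (x₁ x₂ x₃ y₁ y₂ y₃ : V)
    (hdist : ({x₁, x₂, x₃, y₁, y₂, y₃} : Finset V).card = 6)
    (w : V) (hw : w ∉ ({x₁, x₂, x₃, y₁, y₂, y₃} : Finset V))
    (e : Finset V)
    (he : e = {x₁, y₁, w} ∨ e = {x₂, y₂, w} ∨ e = {x₃, y₃, w} ∨
          e = {x₁, x₂, w} ∨ e = {x₁, x₃, w} ∨ e = {x₂, x₃, w})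
    (g : Finset V) (hg3 : g.card = 3)
    (hgU : g ∩ ({x₁, x₂, x₃, y₁, y₂, y₃} : Finset V) = ∅)
    (heg : (e ∩ g).Nonempty) :
    HasP33 ({({x₁, y₂, x₃} : Finset V), {x₂, y₃, x₁}, {x₃, y₁, x₂}} ∪ {e, g}) :=
  T_edge_meets_W_triple_gives_P33_general V x₁ x₂ x₃ y₁ y₂ y₃ hdist w hw e he g hgU heg
end

section
/- Let H be a P³₃-free 3-graph containing a triangle C on U, with W = V(H)\U of size s ≥ 3. With T₁ = {{xᵢ,yᵢ,w} : i∈{1,2,3}, w∈W}, the number of edges of H belonging to T₁ is at most s. -/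
open Finset

section

variable {α V : Type*} [DecidableEq V]

lemma hasP33_of_path {H : Finset (Finset V)} {v₁ v₂ v₃ v₄ v₅ v₆ v₇ : V}
    (hv : [v₁, v₂, v₃, v₄, v₅, v₆, v₇].Nodup) (h₁ : {v₁, v₂, v₃} ∈ H)
    (h₂ : {v₃, v₄, v₅} ∈ H) (h₃ : {v₅, v₆, v₇} ∈ H) : HasP33 H := by
  simp only [List.nodup_cons, List.mem_cons, List.not_mem_nil, List.nodup_nil] at hv
  refine ⟨_, _, _, h₁, h₂, h₃, card_eq_one.mpr ⟨v₃, ?_⟩, card_eq_one.mpr ⟨v₅, ?_⟩, ?_⟩ <;>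
    ext <;> simp only [mem_inter, mem_insert, mem_singleton, notMem_empty] <;> grind

lemma eq_of_not_hasP33 {H : Finset (Finset V)} (hP : ¬HasP33 H) {U : Finset V}
    {x y z x' y' w w' : V} (hv : [y, x, z, x', y'].Nodup)
    (hU : ∀ v ∈ [y, x, z, x', y'], v ∈ U) (hw : w ∉ U) (hw' : w' ∉ U)
    (h : {x, y, w} ∈ H) (hxz : {x, z, x'} ∈ H) (h' : {x', y', w'} ∈ H) : w = w' := by
  by_contra hne
  have h'' : {w, y, x} ∈ H := by rwa [insert_comm, pair_comm, insert_comm]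
  refine hP (hasP33_of_path ?_ h'' hxz h')
  have := fun h => hw (hU w h)
  have := fun h => hw' (hU w' h)
  simp only [List.nodup_cons, List.mem_cons, List.not_mem_nil, List.nodup_nil] at hv this ⊢
  grind

lemma card_inter_image_le (H : Finset V) (s : Finset α) (f : α → V) :
    #(H ∩ s.image f) ≤ #(s.filter (f · ∈ H)) := by
  rw [inter_comm, ← filter_mem_eq_inter, filter_image]
  exact card_image_le

lemma card_le_one_of_forall_eq {A B : Finset α} (h : ∀ a ∈ A, ∀ b ∈ B, a = b) (hA : 0 < #A) :
    #B ≤ 1 := by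
  obtain ⟨a, ha⟩ := card_pos.mp hA
  exact card_le_one.mpr fun b hb b' hb' => (h a ha b hb).symm.trans (h a ha b' hb')

lemma card_add_card_add_card_le {A B C W : Finset α} (hA : A ⊆ W) (hB : B ⊆ W) (hC : C ⊆ W)
    (hW : 3 ≤ #W) (hAB : ∀ a ∈ A, ∀ b ∈ B, a = b) (hBC : ∀ b ∈ B, ∀ c ∈ C, b = c)
    (hCA : ∀ c ∈ C, ∀ a ∈ A, c = a) : #A + #B + #C ≤ #W := by
  have := card_le_card hA
  have := card_le_card hB
  have := card_le_card hC
  have := card_le_one_of_forall_eq hAB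
  have := card_le_one_of_forall_eq hBC
  have := card_le_one_of_forall_eq hCA
  have := card_le_one_of_forall_eq fun b hb a ha => (hAB a ha b hb).symm
  have := card_le_one_of_forall_eq fun c hc b hb => (hBC b hb c hc).symm
  have := card_le_one_of_forall_eq fun a ha c hc => (hCA c hc a ha).symm
  omega

end

theorem H_cap_T1_le_s_general (V : Type*) [Fintype V] [DecidableEq V]
    (H : Finset (Finset V)) (hP : ¬ HasP33 H)
    (x₁ x₂ x₃ y₁ y₂ y₃ : V)
    (hdist : ({x₁, x₂, x₃, y₁, y₂, y₃} : Finset V).card = 6)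
    (hc1 : ({x₁, y₂, x₃} : Finset V) ∈ H) (hc2 : ({x₂, y₃, x₁} : Finset V) ∈ H)
    (hc3 : ({x₃, y₁, x₂} : Finset V) ∈ H)
    (hs : 3 ≤ (Finset.univ \ ({x₁, x₂, x₃, y₁, y₂, y₃} : Finset V)).card) :
    (H ∩ (((Finset.univ \ ({x₁, x₂, x₃, y₁, y₂, y₃} : Finset V)).image
        fun w => ({x₁, y₁, w} : Finset V)) ∪
      ((Finset.univ \ ({x₁, x₂, x₃, y₁, y₂, y₃} : Finset V)).image
        fun w => ({x₂, y₂, w} : Finset V)) ∪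
      ((Finset.univ \ ({x₁, x₂, x₃, y₁, y₂, y₃} : Finset V)).image
        fun w => ({x₃, y₃, w} : Finset V)))).card ≤
      (Finset.univ \ ({x₁, x₂, x₃, y₁, y₂, y₃} : Finset V)).card := by
  have hU : [x₁, x₂, x₃, y₁, y₂, y₃].Nodup := by
    simpa [hdist] using Multiset.toFinset_card_eq_card_iff_nodup
      (m := (([x₁, x₂, x₃, y₁, y₂, y₃] : List V) : Multiset V))
  set U : Finset V := {x₁, x₂, x₃, y₁, y₂, y₃}
  set W := univ \ U
  let S (x y : V) : Finset V := W.filter fun w => {x, y, w} ∈ H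
  have cross {x y z x' y' : V} (hv : [y, x, z, x', y'].Nodup)
      (hvU : ∀ v ∈ [y, x, z, x', y'], v ∈ U) (hxz : {x, z, x'} ∈ H) :
      ∀ w ∈ S x y, ∀ w' ∈ S x' y', w = w' := by
    intro w hw w' hw'
    simp only [S, W, mem_filter, mem_sdiff] at hw hw'
    exact eq_of_not_hasP33 hP hv hvU hw.1.2 hw'.1.2 hw.2 hxz hw'.2
  have h13 : ∀ w ∈ S x₁ y₁, ∀ w' ∈ S x₃ y₃, w = w' := cross (by simp; grind) (by simp [U]) hc1
  have h21 : ∀ w ∈ S x₂ y₂, ∀ w' ∈ S x₁ y₁, w = w' := cross (by simp; grind) (by simp [U]) hc2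
  have h32 : ∀ w ∈ S x₃ y₃, ∀ w' ∈ S x₂ y₂, w = w' := cross (by simp; grind) (by simp [U]) hc3
  calc _ ≤ #(S x₁ y₁) + #(S x₂ y₂) + #(S x₃ y₃) := by
        rw [inter_union_distrib_left, inter_union_distrib_left]
        grw [card_union_le, card_union_le, card_inter_image_le, card_inter_image_le,
          card_inter_image_le]
    _ ≤ #W := (add_right_comm _ _ _).trans_le <| card_add_card_add_card_le
        (filter_subset _ W) (filter_subset _ W) (filter_subset _ W) hs h13 h32 h21

theorem H_cap_T1_le_s (V : Type*) [Fintype V] [DecidableEq V]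
    (H : Finset (Finset V)) (h3 : ∀ e ∈ H, e.card = 3) (hP : ¬ HasP33 H)
    (x₁ x₂ x₃ y₁ y₂ y₃ : V)
    (hdist : ({x₁, x₂, x₃, y₁, y₂, y₃} : Finset V).card = 6)
    (hc1 : ({x₁, y₂, x₃} : Finset V) ∈ H) (hc2 : ({x₂, y₃, x₁} : Finset V) ∈ H)
    (hc3 : ({x₃, y₁, x₂} : Finset V) ∈ H)
    (hs : 3 ≤ (Finset.univ \ ({x₁, x₂, x₃, y₁, y₂, y₃} : Finset V)).card) :
    (H ∩ (((Finset.univ \ ({x₁, x₂, x₃, y₁, y₂, y₃} : Finset V)).image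
        fun w => ({x₁, y₁, w} : Finset V)) ∪
      ((Finset.univ \ ({x₁, x₂, x₃, y₁, y₂, y₃} : Finset V)).image
        fun w => ({x₂, y₂, w} : Finset V)) ∪
      ((Finset.univ \ ({x₁, x₂, x₃, y₁, y₂, y₃} : Finset V)).image
        fun w => ({x₃, y₃, w} : Finset V)))).card ≤
      (Finset.univ \ ({x₁, x₂, x₃, y₁, y₂, y₃} : Finset V)).card :=
  H_cap_T1_le_s_general V H hP x₁ x₂ x₃ y₁ y₂ y₃ hdist hc1 hc2 hc3 hs
end

section
/- Let H be a P³₃-free 3-graph containing a triangle C on U, with W = V(H)\U of size s ≥ 2. With T = T₁ ∪ T₂ where T₁ = {{xᵢ,yᵢ,w} : i, w∈W} and T₂ = {{xᵢ,xⱼ,w} : i<j, w∈W}, the number of edges of H belonging to T is at most 3s. -/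
open Finset

theorem card_add_card_le_of_forall_eq {α : Type*} {A B W : Finset α} (hA : A ⊆ W) (hB : B ⊆ W)
    (hW : 2 ≤ #W) (h : ∀ a ∈ A, ∀ b ∈ B, a = b) : #A + #B ≤ #W := by
  rcases A.eq_empty_or_nonempty with rfl | ⟨a, ha⟩
  · simpa using card_le_card hB
  rcases B.eq_empty_or_nonempty with rfl | ⟨b, hb⟩
  · simpa using card_le_card hA
  have hA₁ : #A ≤ 1 := card_le_one.2 fun a₁ h₁ a₂ h₂ ↦ (h a₁ h₁ b hb).trans (h a₂ h₂ b hb).symm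
  have hB₁ : #B ≤ 1 := card_le_one.2 fun b₁ h₁ b₂ h₂ ↦ (h a ha b₁ h₁).symm.trans (h a ha b₂ h₂)
  omega

theorem card_inter_union_image_le {α β : Type*} [DecidableEq β] (H : Finset β) {W : Finset α}
    (f g : α → β) (hW : 2 ≤ #W) (hfg : ∀ a ∈ W, ∀ b ∈ W, f a ∈ H → g b ∈ H → a = b) :
    #(H ∩ (W.image f ∪ W.image g)) ≤ #W := by
  have hsplit : H ∩ (W.image f ∪ W.image g) =
      {a ∈ W | f a ∈ H}.image f ∪ {b ∈ W | g b ∈ H}.image g := by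
    ext e
    simp only [mem_inter, mem_union, mem_image, mem_filter]
    grind
  calc #(H ∩ (W.image f ∪ W.image g))
      ≤ #{a ∈ W | f a ∈ H} + #{b ∈ W | g b ∈ H} :=
        hsplit ▸ (card_union_le _ _).trans (add_le_add card_image_le card_image_le)
    _ ≤ #W := card_add_card_le_of_forall_eq (filter_subset _ _) (filter_subset _ _) hW
        fun a ha b hb ↦ by
          rw [mem_filter] at ha hb
          exact hfg a ha.1 b hb.1 ha.2 hb.2

theorem card_inter_union_six_le {α : Type*} [DecidableEq α] (H A₁ A₂ A₃ B₁ B₂ B₃ : Finset α) :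
    #(H ∩ (A₁ ∪ A₂ ∪ A₃ ∪ B₃ ∪ B₂ ∪ B₁)) ≤
      #(H ∩ (A₁ ∪ B₁)) + #(H ∩ (A₂ ∪ B₂)) + #(H ∩ (A₃ ∪ B₃)) := by
  calc #(H ∩ (A₁ ∪ A₂ ∪ A₃ ∪ B₃ ∪ B₂ ∪ B₁))
      ≤ #(H ∩ (A₁ ∪ B₁) ∪ H ∩ (A₂ ∪ B₂) ∪ H ∩ (A₃ ∪ B₃)) :=
        card_le_card fun e ↦ by simp only [mem_inter, mem_union]; tauto
    _ ≤ _ := (card_union_le _ _).trans (Nat.add_le_add_right (card_union_le _ _) _)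

section

variable {V : Type*} [DecidableEq V]

theorem hasP33_of_mem {H : Finset (Finset V)} {a b c d e f g : V}
    (hnd : [a, b, c, d, e, f, g].Nodup)
    (h₁ : {c, b, a} ∈ H) (h₂ : {e, d, c} ∈ H) (h₃ : {e, f, g} ∈ H) : HasP33 H := by
  simp only [List.nodup_cons, List.mem_cons, List.not_mem_nil, or_false, not_or,
    List.nodup_nil, and_true] at hnd
  refine ⟨_, _, _, h₁, h₂, h₃, card_eq_one.2 ⟨c, ?_⟩, card_eq_one.2 ⟨e, ?_⟩, ?_⟩ <;>
    ext <;> simp only [mem_inter, mem_insert, mem_singleton, notMem_empty] <;> grind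

theorem eq_of_not_hasP33_s11 {H : Finset (Finset V)} (hP : ¬ HasP33 H) {x x' x'' y y' a b : V}
    (hC : {x', y', x} ∈ H) (hT₁ : {x, y, a} ∈ H) (hT₂ : {x', x'', b} ∈ H)
    (hnd : [x, x', x'', y, y'].Nodup) (ha : a ∉ [x, x', x'', y, y'])
    (hb : b ∉ [x, x', x'', y, y']) : a = b := by
  by_contra hab
  exact hP (hasP33_of_mem (by grind) hT₁ hC hT₂)

end

theorem H_cap_T_le_3s_general (V : Type*) [Fintype V] [DecidableEq V]
    (H : Finset (Finset V)) (hP : ¬ HasP33 H)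
    (x₁ x₂ x₃ y₁ y₂ y₃ : V)
    (hdist : ({x₁, x₂, x₃, y₁, y₂, y₃} : Finset V).card = 6)
    (hc1 : ({x₁, y₂, x₃} : Finset V) ∈ H) (hc2 : ({x₂, y₃, x₁} : Finset V) ∈ H)
    (hc3 : ({x₃, y₁, x₂} : Finset V) ∈ H)
    (hs : 2 ≤ (Finset.univ \ ({x₁, x₂, x₃, y₁, y₂, y₃} : Finset V)).card) :
    (H ∩ (((Finset.univ \ ({x₁, x₂, x₃, y₁, y₂, y₃} : Finset V)).image
        fun w => ({x₁, y₁, w} : Finset V)) ∪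
      ((Finset.univ \ ({x₁, x₂, x₃, y₁, y₂, y₃} : Finset V)).image
        fun w => ({x₂, y₂, w} : Finset V)) ∪
      ((Finset.univ \ ({x₁, x₂, x₃, y₁, y₂, y₃} : Finset V)).image
        fun w => ({x₃, y₃, w} : Finset V)) ∪
      ((Finset.univ \ ({x₁, x₂, x₃, y₁, y₂, y₃} : Finset V)).image
        fun w => ({x₁, x₂, w} : Finset V)) ∪
      ((Finset.univ \ ({x₁, x₂, x₃, y₁, y₂, y₃} : Finset V)).image
        fun w => ({x₁, x₃, w} : Finset V)) ∪
      ((Finset.univ \ ({x₁, x₂, x₃, y₁, y₂, y₃} : Finset V)).image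
        fun w => ({x₂, x₃, w} : Finset V)))).card ≤
      3 * (Finset.univ \ ({x₁, x₂, x₃, y₁, y₂, y₃} : Finset V)).card := by
  set W := Finset.univ \ ({x₁, x₂, x₃, y₁, y₂, y₃} : Finset V)
  have hU : [x₁, x₂, x₃, y₁, y₂, y₃].Nodup := by
    rw [← Multiset.coe_nodup, ← Multiset.toFinset_card_eq_card_iff_nodup]
    simpa using hdist
  have hW_notMem : ∀ w ∈ W, w ∉ [x₁, x₂, x₃, y₁, y₂, y₃] := by
    intro w hw
    simpa [W] using hw
  refine (card_inter_union_six_le ..).trans <| (add_le_add_three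
    (card_inter_union_image_le H _ _ hs ?_) (card_inter_union_image_le H _ _ hs ?_)
    (card_inter_union_image_le H _ _ hs ?_)).trans_eq (by ring) <;>
    intro a ha b hb hT₁ hT₂
  · exact eq_of_not_hasP33_s11 hP hc2 hT₁ hT₂ (by grind) (by grind) (by grind)
  · exact eq_of_not_hasP33_s11 hP hc3 hT₁ (by rwa [insert_comm] at hT₂) (by grind) (by grind)
      (by grind)
  · exact eq_of_not_hasP33_s11 hP hc1 hT₁ hT₂ (by grind) (by grind) (by grind)

theorem H_cap_T_le_3s (V : Type*) [Fintype V] [DecidableEq V]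
    (H : Finset (Finset V)) (h3 : ∀ e ∈ H, e.card = 3) (hP : ¬ HasP33 H)
    (x₁ x₂ x₃ y₁ y₂ y₃ : V)
    (hdist : ({x₁, x₂, x₃, y₁, y₂, y₃} : Finset V).card = 6)
    (hc1 : ({x₁, y₂, x₃} : Finset V) ∈ H) (hc2 : ({x₂, y₃, x₁} : Finset V) ∈ H)
    (hc3 : ({x₃, y₁, x₂} : Finset V) ∈ H)
    (hs : 2 ≤ (Finset.univ \ ({x₁, x₂, x₃, y₁, y₂, y₃} : Finset V)).card) :
    (H ∩ (((Finset.univ \ ({x₁, x₂, x₃, y₁, y₂, y₃} : Finset V)).image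
        fun w => ({x₁, y₁, w} : Finset V)) ∪
      ((Finset.univ \ ({x₁, x₂, x₃, y₁, y₂, y₃} : Finset V)).image
        fun w => ({x₂, y₂, w} : Finset V)) ∪
      ((Finset.univ \ ({x₁, x₂, x₃, y₁, y₂, y₃} : Finset V)).image
        fun w => ({x₃, y₃, w} : Finset V)) ∪
      ((Finset.univ \ ({x₁, x₂, x₃, y₁, y₂, y₃} : Finset V)).image
        fun w => ({x₁, x₂, w} : Finset V)) ∪
      ((Finset.univ \ ({x₁, x₂, x₃, y₁, y₂, y₃} : Finset V)).image
        fun w => ({x₁, x₃, w} : Finset V)) ∪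
      ((Finset.univ \ ({x₁, x₂, x₃, y₁, y₂, y₃} : Finset V)).image
        fun w => ({x₂, x₃, w} : Finset V)))).card ≤
      3 * (Finset.univ \ ({x₁, x₂, x₃, y₁, y₂, y₃} : Finset V)).card :=
  H_cap_T_le_3s_general V H hP x₁ x₂ x₃ y₁ y₂ y₃ hdist hc1 hc2 hc3 hs
end

section
/- Let H be a P³₃-free 3-graph containing a triangle C on U, W = V(H)\U with |W| = s ≥ 2. Then |H[U]| + |H(U,W)| ≤ 14 + 3s, where H[U] are the edges inside U and H(U,W) the edges meeting both U and W. -/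
/-- `H` contains a copy of the 3-uniform triangle `C³₃`. -/
def HasC33 {V : Type*} [DecidableEq V] (H : Finset (Finset V)) : Prop :=
  ∃ a b c d e f : V, ({a, b, c, d, e, f} : Finset V).card = 6 ∧
    ({a, b, c} : Finset V) ∈ H ∧ ({c, d, e} : Finset V) ∈ H ∧ ({e, f, a} : Finset V) ∈ H

/-!
Index `U` by `Fin 6` and look at the trace `e ∩ U` of an edge `e`. If `e` meets `U` in one vertex,
or in two vertices other than some `xᵢxⱼ` or `xᵢyᵢ`, then `e` and two triangle edges form a `P³₃`;
so every crossing edge is `{w} ∪ q` with `w ∉ U` and `q` one of these six pairs. For the same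
reason, pairs used by different outside vertices intersect. Each `xᵢyᵢ` meets only three of the six
pairs, and only three pairs are not of the form `xᵢyᵢ`, so there are at most `6 + 3 (s - 1)`
crossing edges. A single crossing edge already forbids some triples of `U` and makes others
conflict in pairs, which leaves at most `11` edges inside `U`; without crossing edges there are at
most `20`.
-/

open Finset Function

section

variable {V : Type*} [DecidableEq V]

def IsP33 (e₁ e₂ e₃ : Finset V) : Prop :=
  #(e₁ ∩ e₂) = 1 ∧ #(e₂ ∩ e₃) = 1 ∧ e₁ ∩ e₃ = ∅

instance (e₁ e₂ e₃ : Finset V) : Decidable (IsP33 e₁ e₂ e₃) :=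
  inferInstanceAs (Decidable (_ ∧ _ ∧ _))

section Trace

variable {ι : Type*} [Fintype ι] {φ : ι → V}

def trace (φ : ι → V) (e : Finset V) : Finset ι := {i | φ i ∈ e}

theorem trace_inter [DecidableEq ι] (x y : Finset V) : trace φ (x ∩ y) = trace φ x ∩ trace φ y := by
  ext; simp [trace]

theorem image_trace (e : Finset V) : (trace φ e).image φ = e ∩ univ.image φ := by
  ext v
  simp only [trace, mem_image, mem_filter, mem_univ, true_and, mem_inter]
  constructor
  · rintro ⟨i, hi, rfl⟩
    exact ⟨hi, i, rfl⟩
  · rintro ⟨hv, i, rfl⟩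
    exact ⟨i, hv, rfl⟩

theorem trace_image (hφ : Injective φ) (t : Finset ι) : trace φ (t.image φ) = t := by
  ext; simp [trace, hφ.eq_iff]

theorem trace_insert_image (hφ : Injective φ) {w : V} (hw : w ∉ univ.image φ) (t : Finset ι) :
    trace φ (insert w (t.image φ)) = t := by
  ext i
  have : φ i ≠ w := fun h => hw (h ▸ mem_image_of_mem φ (mem_univ i))
  simp [trace, this, hφ.eq_iff]

theorem image_subset_image_univ (t : Finset ι) : t.image φ ⊆ univ.image φ :=
  image_subset_image (subset_univ t)

theorem card_trace (hφ : Injective φ) (e : Finset V) : #(trace φ e) = #(e ∩ univ.image φ) := by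
  rw [← image_trace, card_image_of_injective _ hφ]

theorem isP33_of_isP33_trace [DecidableEq ι] (hφ : Injective φ) {x y z : Finset V}
    (hxy : x ∩ y ⊆ univ.image φ) (hyz : y ∩ z ⊆ univ.image φ) (hxz : x ∩ z ⊆ univ.image φ)
    (h : IsP33 (trace φ x) (trace φ y) (trace φ z)) : IsP33 x y z := by
  obtain ⟨h₁, h₂, h₃⟩ := h
  rw [← trace_inter] at h₁ h₂ h₃
  rw [card_trace hφ, inter_eq_left.2 hxy] at h₁
  rw [card_trace hφ, inter_eq_left.2 hyz] at h₂
  refine ⟨h₁, h₂, ?_⟩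
  rw [← inter_eq_left.2 hxz, ← image_trace, h₃, image_empty]

theorem not_isP33_trace [DecidableEq ι] (hφ : Injective φ) {H : Finset (Finset V)}
    (hP : ¬HasP33 H) {x y z : Finset V} (hx : x ∈ H) (hy : y ∈ H) (hz : z ∈ H)
    (hxy : x ∩ y ⊆ univ.image φ) (hyz : y ∩ z ⊆ univ.image φ) (hxz : x ∩ z ⊆ univ.image φ) :
    ¬IsP33 (trace φ x) (trace φ y) (trace φ z) := fun h =>
  hP ⟨x, y, z, hx, hy, hz, isP33_of_isP33_trace hφ hxy hyz hxz h⟩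

end Trace

-- Vertices `x₁ x₂ x₃ y₁ y₂ y₃` are `0 … 5`; the triangle edges are `xᵢ yᵢ₊₁ xᵢ₊₂` (indices mod 3).
def triEdge : Fin 3 → Finset (Fin 6) := ![{0, 4, 2}, {1, 5, 0}, {2, 3, 1}]

def crossingPairs : Finset (Finset (Fin 6)) := {{0, 1}, {0, 2}, {1, 2}, {0, 3}, {1, 4}, {2, 5}}

def oppositePairs : Finset (Finset (Fin 6)) := {{0, 3}, {1, 4}, {2, 5}}

theorem exists_isP33_triEdge : ∀ s : Finset (Fin 6), s.Nonempty → #s ≤ 2 → s ∉ crossingPairs →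
    ∃ j k, IsP33 s (triEdge j) (triEdge k) := by
  decide

theorem exists_isP33_triEdge_of_disjoint : ∀ q ∈ crossingPairs, ∀ q' ∈ crossingPairs,
    q ∩ q' = ∅ → ∃ j, IsP33 q (triEdge j) q' := by
  decide

set_option maxRecDepth 10000 in
theorem exists_conflict_cover : ∀ q ∈ crossingPairs,
    ∃ B : List (Finset (Finset (Fin 6))), B.length ≤ 11 ∧
      (∀ t : Finset (Fin 6), #t = 3 → (∀ j, ¬IsP33 t q (triEdge j) ∧ ¬IsP33 q t (triEdge j) ∧
        ¬IsP33 q (triEdge j) t) → ∃ b ∈ B, t ∈ b) ∧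
      ∀ b ∈ B, ∀ t ∈ b, ∀ t' ∈ b, t = t' ∨ IsP33 t q t' ∨ IsP33 q t t' ∨ IsP33 q t' t := by
  simp only [crossingPairs, mem_insert, mem_singleton, forall_eq_or_imp, forall_eq]
  refine ⟨⟨[{{0,2,4}}, {{0,1,5}}, {{1,2,3}},
      {{0,2,3}, {1,4,5}}, {{0,2,5}, {1,3,4}}, {{0,3,4}, {1,2,5}}, {{0,3,5}, {1,2,4}},
      {{0,1,2}}, {{0,1,3}}, {{0,1,4}}, {{2,3,4}}], by decide⟩,
    ⟨[{{0,2,4}}, {{0,1,5}}, {{1,2,3}},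
      {{0,1,3}, {2,4,5}}, {{0,1,4}, {1,3,5}}, {{0,3,4}, {1,2,5}}, {{0,3,5}, {1,2,4}},
      {{0,1,2}}, {{0,2,3}}, {{0,2,5}}, {{2,3,5}}], by decide⟩,
    ⟨[{{0,2,4}}, {{0,1,5}}, {{1,2,3}},
      {{0,1,3}, {0,4,5}}, {{0,1,4}, {2,3,5}}, {{0,2,3}, {1,4,5}}, {{0,2,5}, {1,3,4}},
      {{0,1,2}}, {{1,2,4}}, {{1,2,5}}, {{2,4,5}}], by decide⟩,
    ⟨[{{0,2,4}}, {{0,1,5}}, {{1,2,3}},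
      {{0,1,2}, {3,4,5}}, {{0,1,4}, {2,3,5}}, {{0,2,5}, {1,3,4}},
      {{0,1,3}}, {{0,2,3}}, {{0,3,4}}, {{0,3,5}}], by decide⟩,
    ⟨[{{0,2,4}}, {{0,1,5}}, {{1,2,3}},
      {{0,1,2}, {3,4,5}}, {{0,1,3}, {2,4,5}}, {{0,3,4}, {1,2,5}},
      {{0,1,4}}, {{1,2,4}}, {{1,3,4}}, {{1,4,5}}], by decide⟩,
    ⟨[{{0,2,4}}, {{0,1,5}}, {{1,2,3}},
      {{0,1,2}, {3,4,5}}, {{0,2,3}, {1,4,5}}, {{0,3,5}, {1,2,4}},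
      {{0,2,5}}, {{1,2,5}}, {{2,3,5}}, {{2,4,5}}], by decide⟩⟩

theorem card_le_eleven {J : Finset (Finset (Fin 6))} {q : Finset (Fin 6)} (hq : q ∈ crossingPairs)
    (hJ : ∀ t ∈ J, #t = 3) (htri : ∀ j, triEdge j ∈ J)
    (hfree : ∀ t ∈ J, ∀ t' ∈ J, ¬IsP33 t q t' ∧ ¬IsP33 q t t') : #J ≤ 11 := by
  obtain ⟨B, hB, hcover, hconflict⟩ := exists_conflict_cover q hq
  refine (card_le_card_of_forall_subsingleton (· ∈ ·) (t := B.toFinset) ?_ ?_).trans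
    ((List.toFinset_card_le B).trans hB)
  · intro t ht
    obtain ⟨b, hb, htb⟩ := hcover t (hJ t ht) fun j =>
      ⟨(hfree t ht _ (htri j)).1, (hfree t ht _ (htri j)).2, (hfree _ (htri j) t ht).2⟩
    exact ⟨b, List.mem_toFinset.2 hb, htb⟩
  · rintro b hb t ⟨ht, htb⟩ t' ⟨ht', ht'b⟩
    rcases hconflict b (List.mem_toFinset.1 hb) t htb t' ht'b with h | h | h | h
    · exact h
    · exact absurd h (hfree t ht t' ht').1
    · exact absurd h (hfree t ht t' ht').2
    · exact absurd h (hfree t' ht' t ht).2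

theorem sum_card_le_of_inter_nonempty {ι : Type*} [DecidableEq ι] (W : Finset ι)
    (Q : ι → Finset (Finset (Fin 6))) (hQ : ∀ w, Q w ⊆ crossingPairs)
    (hcross : ∀ w ∈ W, ∀ w' ∈ W, w ≠ w' → ∀ q ∈ Q w, ∀ q' ∈ Q w', (q ∩ q').Nonempty) :
    ∑ w ∈ W, #(Q w) ≤ 3 + 3 * #W := by
  by_cases hopp : ∃ w ∈ W, ∃ m ∈ Q w, m ∈ oppositePairs
  · obtain ⟨w₀, hw₀, m, hm, hmopp⟩ := hopp
    have hmeet : ∀ m ∈ oppositePairs, #{q ∈ crossingPairs | (q ∩ m).Nonempty} ≤ 3 := by decide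
    have hother : ∀ w ∈ W.erase w₀, #(Q w) ≤ 3 := fun w hw =>
      (card_le_card fun q hq => mem_filter.2 ⟨hQ w hq, hcross w (mem_of_mem_erase hw) w₀ hw₀
        (ne_of_mem_erase hw) q hq m hm⟩).trans (hmeet m hmopp)
    have hw₀_le : #(Q w₀) ≤ 6 := (card_le_card (hQ w₀)).trans (by decide)
    have hsum := sum_le_card_nsmul _ _ _ hother
    rw [card_erase_of_mem hw₀, smul_eq_mul] at hsum
    have hpos := card_pos.2 ⟨w₀, hw₀⟩
    rw [← add_sum_erase W _ hw₀]
    calc #(Q w₀) + ∑ w ∈ W.erase w₀, #(Q w) ≤ 6 + (#W - 1) * 3 := add_le_add hw₀_le hsum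
      _ ≤ 3 + 3 * #W := by omega
  · push Not at hopp
    have hall : ∀ w ∈ W, #(Q w) ≤ 3 := fun w hw =>
      (card_le_card fun q hq => mem_sdiff.2 ⟨hQ w hq, hopp w hw q hq⟩).trans (by decide)
    have hsum := sum_le_card_nsmul _ _ _ hall
    rw [smul_eq_mul] at hsum
    omega

section Triangle

variable {H : Finset (Finset V)} {φ : Fin 6 → V}

theorem eq_insert_image_of_crossing (hφ : Injective φ) (hP : ¬HasP33 H)
    (htri : ∀ j, (triEdge j).image φ ∈ H) {e : Finset V} (he : e ∈ H) (he3 : #e = 3)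
    (hin : (e ∩ univ.image φ).Nonempty) (hout : (e \ univ.image φ).Nonempty) :
    ∃ w ∉ univ.image φ, ∃ q ∈ crossingPairs, e = insert w (q.image φ) := by
  have hsplit : #(e ∩ univ.image φ) + #(e \ univ.image φ) = 3 := by
    rw [card_inter_add_card_sdiff, he3]
  have hout_pos := card_pos.2 hout
  by_cases hq : trace φ e ∈ crossingPairs
  · have hcard : #(e ∩ univ.image φ) = 2 := by
      rw [← card_trace hφ]; exact (by decide : ∀ q ∈ crossingPairs, #q = 2) _ hq
    obtain ⟨w, hw⟩ := card_eq_one.1 (by omega : #(e \ univ.image φ) = 1)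
    have hwU : w ∉ univ.image φ := (mem_sdiff.1 (hw ▸ mem_singleton_self w)).2
    refine ⟨w, hwU, trace φ e, hq, ?_⟩
    rw [image_trace, insert_eq, ← hw, sdiff_union_inter]
  · obtain ⟨j, k, h⟩ := exists_isP33_triEdge (trace φ e)
      (by rw [← card_pos, card_trace hφ]; exact card_pos.2 hin)
      (by rw [card_trace hφ]; omega) hq
    rw [← trace_image hφ (triEdge j), ← trace_image hφ (triEdge k)] at h
    have hT : ∀ j, (triEdge j).image φ ⊆ univ.image φ := fun j => image_subset_image_univ _
    exact absurd h (not_isP33_trace hφ hP he (htri j) (htri k) (inter_subset_right.trans (hT j))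
      (inter_subset_right.trans (hT k)) (inter_subset_right.trans (hT k)))

theorem inter_nonempty_of_crossing (hφ : Injective φ) (hP : ¬HasP33 H)
    (htri : ∀ j, (triEdge j).image φ ∈ H) {w w' : V} (hw : w ∉ univ.image φ)
    (hw' : w' ∉ univ.image φ) (hne : w ≠ w') {q q' : Finset (Fin 6)} (hq : q ∈ crossingPairs)
    (hq' : q' ∈ crossingPairs) (he : insert w (q.image φ) ∈ H)
    (he' : insert w' (q'.image φ) ∈ H) : (q ∩ q').Nonempty := by
  rw [nonempty_iff_ne_empty]
  intro hdisj
  obtain ⟨j, h⟩ := exists_isP33_triEdge_of_disjoint q hq q' hq' hdisj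
  rw [← trace_insert_image hφ hw q, ← trace_image hφ (triEdge j),
    ← trace_insert_image hφ hw' q'] at h
  have hT := image_subset_image_univ (φ := φ) (triEdge j)
  have hcross : insert w (q.image φ) ∩ insert w' (q'.image φ) ⊆ univ.image φ := by
    rw [insert_inter_of_notMem, inter_insert_of_notMem]
    · exact inter_subset_left.trans (image_subset_image_univ q)
    · exact fun h => hw' (image_subset_image_univ q h)
    · intro h
      rcases mem_insert.1 h with h | h
      exacts [hne h, hw (image_subset_image_univ q' h)]
  exact not_isP33_trace hφ hP he (htri j) he' (inter_subset_right.trans hT)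
    (inter_subset_left.trans hT) hcross h

theorem card_filter_subset_le_eleven (hφ : Injective φ) (hP : ¬HasP33 H)
    (htri : ∀ j, (triEdge j).image φ ∈ H) (h3 : ∀ e ∈ H, #e = 3) {w : V}
    (hw : w ∉ univ.image φ) {q : Finset (Fin 6)} (hq : q ∈ crossingPairs)
    (hc : insert w (q.image φ) ∈ H) : #{e ∈ H | e ⊆ univ.image φ} ≤ 11 := by
  set U := univ.image φ
  have himage : ∀ e ⊆ U, (trace φ e).image φ = e := fun e he => by
    rw [image_trace, inter_eq_left.2 he]
  rw [← card_image_of_injOn (f := trace φ) fun x hx y hy hxy => by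
    rw [← himage x (mem_filter.1 hx).2, ← himage y (mem_filter.1 hy).2]; exact congrArg _ hxy]
  refine card_le_eleven hq ?_ (fun j => mem_image.2 ⟨_, mem_filter.2
    ⟨htri j, image_subset_image_univ _⟩, trace_image hφ _⟩) ?_
  · intro t ht
    obtain ⟨e, he, rfl⟩ := mem_image.1 ht
    rw [card_trace hφ, inter_eq_left.2 (mem_filter.1 he).2, h3 e (mem_filter.1 he).1]
  · intro t ht t' ht'
    obtain ⟨x, hx, rfl⟩ := mem_image.1 ht
    obtain ⟨y, hy, rfl⟩ := mem_image.1 ht'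
    rw [mem_filter] at hx hy
    rw [← trace_insert_image hφ hw q]
    exact ⟨not_isP33_trace hφ hP hx.1 hc hy.1 (inter_subset_left.trans hx.2)
        (inter_subset_right.trans hy.2) (inter_subset_left.trans hx.2),
      not_isP33_trace hφ hP hc hx.1 hy.1 (inter_subset_right.trans hx.2)
        (inter_subset_left.trans hx.2) (inter_subset_right.trans hy.2)⟩

theorem card_crossing_le [Fintype V] (hφ : Injective φ) (hP : ¬HasP33 H)
    (htri : ∀ j, (triEdge j).image φ ∈ H) (h3 : ∀ e ∈ H, #e = 3) :
    #{e ∈ H | (e ∩ univ.image φ).Nonempty ∧ (e \ univ.image φ).Nonempty} ≤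
      3 + 3 * #(univ \ univ.image φ) := by
  set W := univ \ univ.image φ
  set Q : V → Finset (Finset (Fin 6)) := fun w => {q ∈ crossingPairs | insert w (q.image φ) ∈ H}
  calc _ ≤ #(W.biUnion fun w => (Q w).image fun q => insert w (q.image φ)) := by
        refine card_le_card fun e he => ?_
        obtain ⟨he, hin, hout⟩ := mem_filter.1 he
        obtain ⟨w, hw, q, hq, rfl⟩ := eq_insert_image_of_crossing hφ hP htri he (h3 e he) hin hout
        exact mem_biUnion.2 ⟨w, mem_sdiff.2 ⟨mem_univ w, hw⟩,
          mem_image.2 ⟨q, mem_filter.2 ⟨hq, he⟩, rfl⟩⟩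
    _ ≤ ∑ w ∈ W, #((Q w).image fun q => insert w (q.image φ)) := card_biUnion_le
    _ ≤ ∑ w ∈ W, #(Q w) := sum_le_sum fun _ _ => card_image_le
    _ ≤ 3 + 3 * #W := by
        refine sum_card_le_of_inter_nonempty W Q (fun _ => filter_subset _ _) ?_
        intro w hw w' hw' hne q hq q' hq'
        rw [mem_filter] at hq hq'
        exact inter_nonempty_of_crossing hφ hP htri (mem_sdiff.1 hw).2 (mem_sdiff.1 hw').2 hne
          hq.1 hq'.1 hq.2 hq'.2

end Triangle

end

theorem cor_eueuw (V : Type*) [Fintype V] [DecidableEq V]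
    (H : Finset (Finset V)) (h3 : ∀ e ∈ H, e.card = 3) (hP : ¬ HasP33 H)
    (x₁ x₂ x₃ y₁ y₂ y₃ : V)
    (hdist : ({x₁, x₂, x₃, y₁, y₂, y₃} : Finset V).card = 6)
    (hc1 : ({x₁, y₂, x₃} : Finset V) ∈ H) (hc2 : ({x₂, y₃, x₁} : Finset V) ∈ H)
    (hc3 : ({x₃, y₁, x₂} : Finset V) ∈ H)
    (hs : 2 ≤ (Finset.univ \ ({x₁, x₂, x₃, y₁, y₂, y₃} : Finset V)).card) :
    (H.filter fun e => e ⊆ ({x₁, x₂, x₃, y₁, y₂, y₃} : Finset V)).card +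
      (H.filter fun e => (e ∩ ({x₁, x₂, x₃, y₁, y₂, y₃} : Finset V)).Nonempty ∧
        (e \ ({x₁, x₂, x₃, y₁, y₂, y₃} : Finset V)).Nonempty).card ≤
      14 + 3 * (Finset.univ \ ({x₁, x₂, x₃, y₁, y₂, y₃} : Finset V)).card := by
  have hinside : #{e ∈ H | e ⊆ {x₁, x₂, x₃, y₁, y₂, y₃}} ≤ 20 :=
    (card_le_card fun e he =>
      mem_powersetCard.2 ⟨(mem_filter.1 he).2, h3 e (mem_filter.1 he).1⟩).trans
        (by rw [card_powersetCard, hdist]; rfl)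
  set φ : Fin 6 → V := ![x₁, x₂, x₃, y₁, y₂, y₃]
  have hU : univ.image φ = {x₁, x₂, x₃, y₁, y₂, y₃} := by simp [φ, Fin.univ_succ, image_insert]
  have hφ : Injective φ := by
    rw [← Set.injOn_univ, ← coe_univ, ← card_image_iff, hU, hdist, card_fin]
  have htri : ∀ j, (triEdge j).image φ ∈ H := by
    intro j; fin_cases j <;> simpa [triEdge, φ, image_insert]
  rw [← hU] at hs hinside ⊢
  by_cases hC : {e ∈ H | (e ∩ univ.image φ).Nonempty ∧ (e \ univ.image φ).Nonempty} = ∅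
  · rw [hC, card_empty]
    omega
  · obtain ⟨e, he⟩ := nonempty_iff_ne_empty.2 hC
    obtain ⟨he, hin, hout⟩ := mem_filter.1 he
    obtain ⟨w, hw, q, hq, rfl⟩ := eq_insert_image_of_crossing hφ hP htri he (h3 _ he) hin hout
    have := card_filter_subset_le_eleven hφ hP htri h3 hw hq he
    have := card_crossing_le hφ hP htri h3
    omega
end

section
/- For n ≥ 11, there exists an n-vertex 3-graph that contains two disjoint edges (a copy of the matching M³₂), contains no linear path P³₃, and has C(n-4,2) + 4 edges. Hence the conditional Turán number ex₃(n; P³₃ | M³₂) is at least C(n-4,2) + 4. -/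
namespace Hypergraph3

open Finset

variable {V : Type*} [DecidableEq V]

theorem not_hasP33_of_forall_avoiding_eq {H : Finset (Finset V)} (c : V) (T : Finset V)
    (h_avoid : ∀ e ∈ H, c ∉ e → e = T) (h_meet : ∀ e ∈ H, #(e ∩ T) ≠ 1) :
    ¬ HasP33 H := by
  rintro ⟨e₁, e₂, e₃, h₁, h₂, h₃, h₁₂, h₂₃, h₁₃⟩
  have h_end : c ∉ e₁ ∨ c ∉ e₃ := by
    by_contra! h
    simpa [h₁₃] using mem_inter.2 h
  rcases h_end with h | h
  · rw [h_avoid e₁ h₁ h, inter_comm] at h₁₂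
    exact h_meet e₂ h₂ h₁₂
  · rw [h_avoid e₃ h₃ h] at h₂₃
    exact h_meet e₂ h₂ h₂₃

def fullStar (c : V) (L : Finset V) : Finset (Finset V) :=
  (L.powersetCard 2).image (insert c)

theorem mem_fullStar {c : V} {L e : Finset V} :
    e ∈ fullStar c L ↔ ∃ p ⊆ L, #p = 2 ∧ insert c p = e := by
  simp only [fullStar, mem_image, mem_powersetCard, and_assoc]

theorem card_fullStar {c : V} {L : Finset V} (hc : c ∉ L) : #(fullStar c L) = (#L).choose 2 := by
  rw [fullStar, card_image_of_injOn, card_powersetCard]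
  intro p hp q hq hpq
  rw [mem_coe, mem_powersetCard] at hp hq
  rw [← erase_insert (fun h => hc (hp.1 h)), ← erase_insert (fun h => hc (hq.1 h)), hpq]

theorem card_eq_three_of_mem_fullStar {c : V} {L e : Finset V} (hc : c ∉ L)
    (he : e ∈ fullStar c L) : #e = 3 := by
  obtain ⟨p, hpL, hp, rfl⟩ := mem_fullStar.1 he
  rw [card_insert_of_notMem (fun h => hc (hpL h)), hp]

/-- The paper's `H(n; P|M)` when `#Q = 4`, `c ∈ Q` and `L` is the complement of `Q`. -/
def cliqueStar (Q L : Finset V) (c : V) : Finset (Finset V) :=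
  Q.powersetCard 3 ∪ fullStar c L

section cliqueStar

variable {Q L : Finset V} {c : V}

theorem card_cliqueStar (hQL : Disjoint Q L) (hcL : c ∉ L) :
    #(cliqueStar Q L c) = (#Q).choose 3 + (#L).choose 2 := by
  have h_disj : Disjoint (Q.powersetCard 3) (fullStar c L) := by
    refine disjoint_left.2 fun e heQ heL => ?_
    obtain ⟨p, hpL, hp, rfl⟩ := mem_fullStar.1 heL
    obtain ⟨x, hx⟩ := card_pos.1 (by omega : 0 < #p)
    exact disjoint_left.1 hQL ((mem_powersetCard.1 heQ).1 (mem_insert_of_mem hx)) (hpL hx)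
  rw [cliqueStar, card_union_of_disjoint h_disj, card_powersetCard, card_fullStar hcL]

theorem card_eq_three_of_mem_cliqueStar (hcL : c ∉ L) {e : Finset V}
    (he : e ∈ cliqueStar Q L c) : #e = 3 := by
  rcases mem_union.1 he with he | he
  · exact (mem_powersetCard.1 he).2
  · exact card_eq_three_of_mem_fullStar hcL he

theorem eq_erase_of_mem_cliqueStar_of_notMem (hQ : #Q = 4) (hcQ : c ∈ Q) {e : Finset V}
    (he : e ∈ cliqueStar Q L c) (hce : c ∉ e) : e = Q.erase c := by
  rcases mem_union.1 he with he | he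
  · rw [mem_powersetCard] at he
    refine eq_of_subset_of_card_le (subset_erase.2 ⟨he.1, hce⟩) ?_
    rw [card_erase_of_mem hcQ, hQ, he.2]
  · obtain ⟨p, -, -, rfl⟩ := mem_fullStar.1 he
    exact absurd (mem_insert_self c p) hce

theorem card_inter_erase_ne_one (hQL : Disjoint Q L) {e : Finset V}
    (he : e ∈ cliqueStar Q L c) : #(e ∩ Q.erase c) ≠ 1 := by
  rcases mem_union.1 he with he | he
  · rw [mem_powersetCard] at he
    have := pred_card_le_card_erase (s := e) (a := c)
    rw [inter_erase, inter_eq_left.2 he.1]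
    omega
  · obtain ⟨p, hpL, -, rfl⟩ := mem_fullStar.1 he
    suffices insert c p ∩ Q.erase c = ∅ by simp [this]
    refine eq_empty_of_forall_notMem fun x hx => ?_
    obtain ⟨hxp, hxc, hxQ⟩ := by simpa only [mem_inter, mem_erase, mem_insert] using hx
    exact disjoint_left.1 hQL hxQ (hpL (hxp.resolve_left hxc))

theorem not_hasP33_cliqueStar (hQ : #Q = 4) (hcQ : c ∈ Q) (hQL : Disjoint Q L) :
    ¬ HasP33 (cliqueStar Q L c) :=
  not_hasP33_of_forall_avoiding_eq c (Q.erase c)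
    (fun _ he => eq_erase_of_mem_cliqueStar_of_notMem hQ hcQ he)
    (fun _ he => card_inter_erase_ne_one hQL he)

theorem exists_disjoint_edges_cliqueStar (hQ : #Q = 4) (hcQ : c ∈ Q) (hQL : Disjoint Q L)
    (hL : 2 ≤ #L) :
    ∃ e ∈ cliqueStar Q L c, ∃ f ∈ cliqueStar Q L c, e ∩ f = ∅ := by
  obtain ⟨p, hpL, hp⟩ := exists_subset_card_eq hL
  refine ⟨Q.erase c, mem_union_left _ ?_, insert c p, mem_union_right _ ?_, ?_⟩
  · rw [mem_powersetCard, card_erase_of_mem hcQ, hQ]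
    exact ⟨erase_subset c Q, rfl⟩
  · exact mem_fullStar.2 ⟨p, hpL, hp, rfl⟩
  · refine eq_empty_of_forall_notMem fun x hx => ?_
    obtain ⟨⟨hxc, hxQ⟩, hxp⟩ := by simpa only [mem_inter, mem_erase, mem_insert] using hx
    exact disjoint_left.1 hQL hxQ (hpL (hxp.resolve_left hxc))

end cliqueStar

end Hypergraph3

open Hypergraph3 in
theorem lower_bound_P33_given_matching (n : ℕ) (hn : 11 ≤ n) :
    ∃ H : Finset (Finset (Fin n)), (∀ e ∈ H, e.card = 3) ∧ ¬ HasP33 H ∧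
      (∃ e ∈ H, ∃ f ∈ H, e ∩ f = ∅) ∧ H.card = (n - 4).choose 2 + 4 := by
  set Q : Finset (Fin n) := Finset.Iio ⟨4, by omega⟩
  set L : Finset (Fin n) := Finset.Ici ⟨4, by omega⟩
  set c : Fin n := ⟨0, by omega⟩
  have hQ : Q.card = 4 := Fin.card_Iio _
  have hL : L.card = n - 4 := Fin.card_Ici _
  have hcQ : c ∈ Q := by simp [Q, c, Fin.lt_def]
  have hQL : Disjoint Q L := by
    rw [← Finset.disjoint_coe, Finset.coe_Iio, Finset.coe_Ici]
    exact Set.Iio_disjoint_Ici le_rfl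
  have hcL : c ∉ L := Finset.disjoint_left.1 hQL hcQ
  refine ⟨cliqueStar Q L c, fun _ => card_eq_three_of_mem_cliqueStar hcL,
    not_hasP33_cliqueStar hQ hcQ hQL,
    exists_disjoint_edges_cliqueStar hQ hcQ hQL (by omega), ?_⟩
  rw [card_cliqueStar hQL hcL, hQ, hL, add_comm]
  rfl
end

section
/- For n ≥ 7, there exists an n-vertex 3-graph containing a copy of P³₃ but no copy of the triangle C³₃, with C(n-2,2) + 1 edges. Hence ex₃(n; C³₃ | P³₃) ≥ C(n-2,2) + 1. -/
open Finset

theorem nodup_of_card_eq_six {V : Type*} [DecidableEq V] {a b c d e f : V}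
    (h : #({a, b, c, d, e, f} : Finset V) = 6) : [a, b, c, d, e, f].Nodup := by
  have := (Multiset.toFinset_card_eq_card_iff_nodup (m := (↑[a, b, c, d, e, f] : Multiset V))).1 (by simpa using h)
  simpa using this

section Construction

variable {V : Type*} [Fintype V] [DecidableEq V]

/-- The extremal 3-graph `H(n; C|P)` on the vertex type `V`. -/
def cpConstruction (x y z : V) : Finset (Finset V) :=
  {e ∈ (univ : Finset V).powersetCard 3 | {x, y} ⊆ e} ∪
    {e ∈ (univ \ {x, y} : Finset V).powersetCard 3 | {z} ⊆ e}

theorem mem_cpConstruction {x y z : V} {e : Finset V} :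
    e ∈ cpConstruction x y z ↔ #e = 3 ∧ (x ∈ e ∧ y ∈ e ∨ z ∈ e ∧ x ∉ e ∧ y ∉ e) := by
  simp only [cpConstruction, mem_union, mem_filter, mem_powersetCard, subset_univ, true_and,
    subset_sdiff, insert_subset_iff, singleton_subset_iff, disjoint_insert_right,
    disjoint_singleton_right]
  tauto

theorem card_cpConstruction {x y z : V} (hxy : x ≠ y) (hxz : x ≠ z) (hyz : y ≠ z) :
    #(cpConstruction x y z) = (Fintype.card V - 2).choose 2 + 1 := by
  have hdisj : Disjoint {e ∈ (univ : Finset V).powersetCard 3 | {x, y} ⊆ e}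
      {e ∈ (univ \ {x, y} : Finset V).powersetCard 3 | {z} ⊆ e} := by
    refine disjoint_left.2 fun e he₁ he₂ => ?_
    simp only [mem_filter, mem_powersetCard, subset_sdiff, insert_subset_iff] at he₁ he₂
    exact disjoint_left.1 he₂.1.1.2 he₁.2.1 (mem_insert_self x {y})
  have hz : {z} ⊆ univ \ {x, y} := by simp [hxz.symm, hyz.symm]
  have hV : 3 ≤ Fintype.card V :=
    card_eq_three.2 ⟨x, y, z, hxy, hxz, hyz, rfl⟩ ▸ card_le_univ ({x, y, z} : Finset V)
  obtain ⟨k, hk⟩ := Nat.exists_eq_add_of_le' hV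
  rw [cpConstruction, card_union_of_disjoint hdisj,
    card_filter_powersetCard_subset _ _ _ (subset_univ _) (card_le_two.trans (by norm_num)),
    card_filter_powersetCard_subset _ _ _ hz (by simp), card_univ,
    card_sdiff_of_subset (subset_univ _), card_univ, card_pair hxy, card_singleton, hk]
  show (k + 1).choose 1 + k.choose 2 = (k + 1).choose 2 + 1
  rw [Nat.choose_one_right, Nat.choose_succ_succ' k 1, Nat.choose_one_right, one_add_one_eq_two]
  omega

theorem not_hasC33_cpConstruction {x y z : V} (hxy : x ≠ y) :
    ¬ HasC33 (cpConstruction x y z) := by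
  rintro ⟨a, b, c, d, e, f, hcard, h₁, h₂, h₃⟩
  have hnd := nodup_of_card_eq_six hcard
  simp only [List.nodup_cons, List.mem_cons, List.not_mem_nil, or_false, List.nodup_nil,
    and_true, not_or] at hnd
  simp only [mem_cpConstruction, mem_insert, mem_singleton] at h₁ h₂ h₃
  grind

theorem hasP33_cpConstruction (f : Fin 7 ↪ V) : HasP33 (cpConstruction (f 0) (f 1) (f 2)) := by
  refine ⟨({0, 1, 3} : Finset (Fin 7)).map f, ({2, 3, 4} : Finset (Fin 7)).map f,
    ({2, 5, 6} : Finset (Fin 7)).map f, ?_, ?_, ?_, ?_, ?_, ?_⟩ <;>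
  simp only [mem_cpConstruction, card_map, mem_map', ← map_inter, map_eq_empty] <;>
  decide

end Construction

theorem lower_bound_C33_given_P33 (n : ℕ) (hn : 7 ≤ n) :
    ∃ H : Finset (Finset (Fin n)), (∀ e ∈ H, e.card = 3) ∧ HasP33 H ∧ ¬ HasC33 H ∧
      H.card = (n - 2).choose 2 + 1 := by
  let f : Fin 7 ↪ Fin n := Fin.castLEEmb hn
  have hf : ∀ i j : Fin 7, i ≠ j → f i ≠ f j := fun _ _ => f.injective.ne
  refine ⟨cpConstruction (f 0) (f 1) (f 2), fun e he => (mem_cpConstruction.1 he).1,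
    hasP33_cpConstruction f, not_hasC33_cpConstruction (hf 0 1 (by decide)), ?_⟩
  rw [card_cpConstruction (hf 0 1 (by decide)) (hf 0 2 (by decide)) (hf 1 2 (by decide)),
    Fintype.card_fin]
end
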